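/- One-step recurrence under approximate greedy improvement: let π be a deterministic policy of a finite MDP with discount factor γ ∈ [0,1), let Q̃ : S × A → ℝ satisfy ‖Q̃ − Q^π‖∞ ≤ ε, and let π' be greedy with respect to Q̃ (i.e. Q̃(s, π'(s)) = max_{a∈A} Q̃(s,a) for every s). Then (1 − γ) ‖V* − V^{π'}‖∞ ≤ 2γ ‖V* − V^π‖∞ + 2ε, where V* is the unique fixed point of the optimal Bellman operator T. -/

import Mathlib

/-- The policy Bellman operator `(T_π V)(s) = r(s,π(s)) + γ ∑_{s'} P(s'|s,π(s)) V(s')`. -/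
noncomputable def bellmanPol {S A : Type*} [Fintype S] (P : S → A → S → ℝ)
    (r : S → A → ℝ) (γ : ℝ) (π : S → A) (V : S → ℝ) : S → ℝ :=
  fun s => r s (π s) + γ * ∑ s', P s (π s) s' * V s'

/-- The optimal Bellman operator
`(T V)(s) = max_{a∈A} [ r(s,a) + γ ∑_{s'} P(s'|s,a) V(s') ]`. -/
noncomputable def bellmanOpt {S A : Type*} [Fintype S] [Fintype A] [Nonempty A]
    (P : S → A → S → ℝ) (r : S → A → ℝ) (γ : ℝ) (V : S → ℝ) : S → ℝ :=
  fun s => Finset.univ.sup' Finset.univ_nonempty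
    (fun a => r s a + γ * ∑ s', P s a s' * V s')

/-- The action-value function `Q(s,a) = r(s,a) + γ ∑_{s'} P(s'|s,a) V(s')`. -/
noncomputable def qFun {S A : Type*} [Fintype S] (P : S → A → S → ℝ)
    (r : S → A → ℝ) (γ : ℝ) (V : S → ℝ) (s : S) (a : A) : ℝ :=
  r s a + γ * ∑ s', P s a s' * V s'

/-!
Write `Q*` for `qFun` at `V*`, so that `V* = max_a Q*(·, a)` and `V^{π'} = Q^{π'}(·, π' ·)`.
Since `V ↦ qFun V` is `γ`-Lipschitz, the estimate `‖Q̃ − Q^π‖ ≤ ε` gives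
`‖Q̃ − Q*‖ ≤ γ ‖V* − V^π‖ + ε =: δ`, and acting greedily on a `δ`-approximation of `Q*` loses
at most `2δ` against `max_a Q*`. Hence
`V* − V^{π'} = (max_a Q* − Q*(·, π' ·)) + γ P_{π'} (V* − V^{π'})` has sup norm at most
`2δ + γ ‖V* − V^{π'}‖`.
-/

theorem abs_sum_mul_le_norm {S : Type*} [Fintype S] {p : S → ℝ} (hp0 : ∀ s, 0 ≤ p s)
    (hp1 : ∑ s, p s = 1) (f : S → ℝ) : |∑ s, p s * f s| ≤ ‖f‖ :=
  calc |∑ s, p s * f s|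
      ≤ ∑ s, |p s * f s| := Finset.abs_sum_le_sum_abs _ _
    _ = ∑ s, p s * ‖f s‖ := by simp only [abs_mul, abs_of_nonneg (hp0 _), Real.norm_eq_abs]
    _ ≤ ∑ s, p s * ‖f‖ :=
        Finset.sum_le_sum fun s _ => mul_le_mul_of_nonneg_left (norm_le_pi_norm f s) (hp0 s)
    _ = ‖f‖ := by rw [← Finset.sum_mul, hp1, one_mul]

theorem abs_sup'_sub_le_of_eq_sup' {ι : Type*} {t : Finset ι} (ht : t.Nonempty) {f g : ι → ℝ}
    {δ : ℝ} (hfg : ∀ i ∈ t, |f i - g i| ≤ δ) {i : ι} (hi : i ∈ t) (hgi : g i = t.sup' ht g) :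
    |t.sup' ht f - f i| ≤ 2 * δ := by
  have hsup : t.sup' ht f ≤ g i + δ :=
    Finset.sup'_le ht f fun j hj => by
      linarith [(abs_le.mp (hfg j hj)).2, hgi ▸ Finset.le_sup' g hj]
  have hfi : f i ≤ t.sup' ht f := Finset.le_sup' f hi
  rw [abs_of_nonneg (sub_nonneg.mpr hfi)]
  linarith [(abs_le.mp (hfg i hi)).1]

section Bellman

variable {S A : Type*} [Fintype S] {P : S → A → S → ℝ} {r : S → A → ℝ} {γ : ℝ}

theorem bellmanPol_eq_qFun (π : S → A) (V : S → ℝ) (s : S) :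
    bellmanPol P r γ π V s = qFun P r γ V s (π s) := rfl

theorem bellmanOpt_eq_sup'_qFun [Fintype A] [Nonempty A] (V : S → ℝ) (s : S) :
    bellmanOpt P r γ V s = Finset.univ.sup' Finset.univ_nonempty (qFun P r γ V s) := rfl

theorem abs_qFun_sub_qFun_le (hP0 : ∀ s a s', 0 ≤ P s a s') (hP1 : ∀ s a, ∑ s', P s a s' = 1)
    (hγ0 : 0 ≤ γ) (V W : S → ℝ) (s : S) (a : A) :
    |qFun P r γ V s a - qFun P r γ W s a| ≤ γ * ‖V - W‖ := by
  have hdiff : qFun P r γ V s a - qFun P r γ W s a = γ * ∑ s', P s a s' * (V - W) s' := by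
    simp only [qFun, Pi.sub_apply, mul_sub, Finset.sum_sub_distrib]
    ring
  rw [hdiff, abs_mul, abs_of_nonneg hγ0]
  exact mul_le_mul_of_nonneg_left (abs_sum_mul_le_norm (hP0 s a) (hP1 s a) _) hγ0

theorem norm_sub_le_of_abs_sub_qFun_le (hP0 : ∀ s a s', 0 ≤ P s a s')
    (hP1 : ∀ s a, ∑ s', P s a s' = 1) (hγ0 : 0 ≤ γ) {π : S → A} {V V' : S → ℝ}
    (hV' : ∀ s, V' s = bellmanPol P r γ π V' s) {η : ℝ} (hη : 0 ≤ η)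
    (hgap : ∀ s, |V s - qFun P r γ V s (π s)| ≤ η) :
    ‖V - V'‖ ≤ η + γ * ‖V - V'‖ := by
  refine (pi_norm_le_iff_of_nonneg (by positivity)).mpr fun s => ?_
  have hsplit : V s - V' s
      = (V s - qFun P r γ V s (π s)) + (qFun P r γ V s (π s) - qFun P r γ V' s (π s)) := by
    rw [hV' s, bellmanPol_eq_qFun]
    ring
  rw [Pi.sub_apply, Real.norm_eq_abs, hsplit]
  exact (abs_add_le _ _).trans
    (add_le_add (hgap s) (abs_qFun_sub_qFun_le hP0 hP1 hγ0 V V' s (π s)))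

end Bellman

theorem api_one_step_recurrence_general
    {S A : Type*} [Fintype S] [Fintype A] [Nonempty A]
    (P : S → A → S → ℝ)
    (hP0 : ∀ s a s', 0 ≤ P s a s')
    (hP1 : ∀ s a, ∑ s', P s a s' = 1)
    (r : S → A → ℝ) (γ : ℝ) (hγ0 : 0 ≤ γ)
    (π' : S → A) (Vpi Vpi' Vstar : S → ℝ)
    (hVpi' : ∀ s, Vpi' s = bellmanPol P r γ π' Vpi' s)
    (hVstar : ∀ s, Vstar s = bellmanOpt P r γ Vstar s)
    (Qt : S → A → ℝ) (ε : ℝ)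
    (hQt : ‖(fun p : S × A => Qt p.1 p.2) - (fun p : S × A => qFun P r γ Vpi p.1 p.2)‖ ≤ ε)
    (hgreedy : ∀ s, Qt s (π' s) = Finset.univ.sup' Finset.univ_nonempty (fun a => Qt s a)) :
    (1 - γ) * ‖Vstar - Vpi'‖ ≤ 2 * γ * ‖Vstar - Vpi‖ + 2 * ε := by
  have hε : 0 ≤ ε := (norm_nonneg _).trans hQt
  have hQt_apply : ∀ s a, |qFun P r γ Vpi s a - Qt s a| ≤ ε := fun s a => by
    rw [abs_sub_comm, ← Real.norm_eq_abs]
    exact (norm_le_pi_norm _ (s, a)).trans hQt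
  have hQstar : ∀ s a, |qFun P r γ Vstar s a - Qt s a| ≤ γ * ‖Vstar - Vpi‖ + ε := fun s a =>
    (abs_sub_le _ (qFun P r γ Vpi s a) _).trans
      (add_le_add (abs_qFun_sub_qFun_le hP0 hP1 hγ0 Vstar Vpi s a) (hQt_apply s a))
  have hgap : ∀ s, |Vstar s - qFun P r γ Vstar s (π' s)| ≤ 2 * (γ * ‖Vstar - Vpi‖ + ε) :=
    fun s => by
      rw [hVstar s, bellmanOpt_eq_sup'_qFun]
      exact abs_sup'_sub_le_of_eq_sup' _ (fun a _ => hQstar s a) (Finset.mem_univ _)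
        (hgreedy s)
  have := norm_sub_le_of_abs_sub_qFun_le hP0 hP1 hγ0 hVpi' (by positivity) hgap
  linarith

/-- One-step recurrence under approximate greedy improvement: if `‖Q̃ − Q^π‖∞ ≤ ε` and
`π'` is greedy w.r.t. `Q̃`, then `(1 − γ) ‖V* − V^{π'}‖∞ ≤ 2γ ‖V* − V^π‖∞ + 2ε`. -/
theorem api_one_step_recurrence
    {S A : Type*} [Fintype S] [Nonempty S] [Fintype A] [Nonempty A]
    (P : S → A → S → ℝ)
    (hP0 : ∀ s a s', 0 ≤ P s a s')
    (hP1 : ∀ s a, ∑ s', P s a s' = 1)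
    (r : S → A → ℝ) (γ : ℝ) (hγ0 : 0 ≤ γ) (hγ1 : γ < 1)
    (π π' : S → A) (Vpi Vpi' Vstar : S → ℝ)
    (hVpi : ∀ s, Vpi s = bellmanPol P r γ π Vpi s)
    (hVpi' : ∀ s, Vpi' s = bellmanPol P r γ π' Vpi' s)
    (hVstar : ∀ s, Vstar s = bellmanOpt P r γ Vstar s)
    (Qt : S → A → ℝ) (ε : ℝ)
    (hQt : ‖(fun p : S × A => Qt p.1 p.2) - (fun p : S × A => qFun P r γ Vpi p.1 p.2)‖ ≤ ε)
    (hgreedy : ∀ s, Qt s (π' s) = Finset.univ.sup' Finset.univ_nonempty (fun a => Qt s a)) :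
    (1 - γ) * ‖Vstar - Vpi'‖ ≤ 2 * γ * ‖Vstar - Vpi‖ + 2 * ε :=
  api_one_step_recurrence_general P hP0 hP1 r γ hγ0 π' Vpi Vpi' Vstar hVpi' hVstar Qt ε hQt hgreedy
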